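/- arXiv:1712.06970 — 2 statements merged into one kernel-verified Lean document; each statement's English description precedes it below -/
import Mathlib

section
/- The map C = (X,[x,y]) ↦ C_Δ = (X,[x+Δ,y]) is a bijection between the Δ-cliques of an instantaneous link stream L and the cliques of the associated link stream with durations L_Δ, and this bijection preserves maximality: C is a maximal Δ-clique of L if and only if C_Δ is a maximal clique of L_Δ. -/
variable {V : Type*} [DecidableEq V]

/-- Time window `T_Δ = [α+Δ, ω]`. -/
def TD (α ω Δ : ℝ) : Set ℝ := Set.Icc (α + Δ) ω

/-- `T_{u,v} = ⋃_{(t,u,v) ∈ E} [t, t+Δ]`. -/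
def Tuv (E : Finset (ℝ × V × V)) (Δ : ℝ) (u v : V) : Set ℝ :=
  ⋃ t ∈ {t : ℝ | (t, u, v) ∈ E}, Set.Icc t (t + Δ)

/-- `(b,e,u,v) ∈ E_Δ`: `[b,e]` is a maximal nonempty interval included in `T_Δ ∩ T_{u,v}`. -/
def EDelta (E : Finset (ℝ × V × V)) (α ω Δ : ℝ) (b e : ℝ) (u v : V) : Prop :=
  b ≤ e ∧ Set.Icc b e ⊆ TD α ω Δ ∩ Tuv E Δ u v ∧
    ∀ b' e', b' ≤ b → e ≤ e' → Set.Icc b' e' ⊆ TD α ω Δ ∩ Tuv E Δ u v → b' = b ∧ e' = e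

/-- A `Δ`-clique `(X,[x,y])` of the instantaneous link stream on `T = [α,ω]`. -/
def IsDeltaClique (E : Finset (ℝ × V × V)) (α ω Δ : ℝ) (X : Finset V) (x y : ℝ) : Prop :=
  2 ≤ X.card ∧ α ≤ x ∧ y ≤ ω ∧ x + Δ ≤ y ∧
    ∀ u ∈ X, ∀ v ∈ X, u ≠ v → ∀ s, x ≤ s → s + Δ ≤ y →
      ∃ t, s ≤ t ∧ t ≤ s + Δ ∧ (t, u, v) ∈ E

/-- A clique `(X,[x,y])` of the derived link stream with durations `L_Δ`. -/
def IsCliqueD (E : Finset (ℝ × V × V)) (α ω Δ : ℝ) (X : Finset V) (x y : ℝ) : Prop :=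
  2 ≤ X.card ∧ x ≤ y ∧ ∀ u ∈ X, ∀ v ∈ X, u ≠ v →
    ∃ b e, EDelta E α ω Δ b e u v ∧ b ≤ x ∧ y ≤ e

/-- A maximal `Δ`-clique. -/
def IsMaxDeltaClique (E : Finset (ℝ × V × V)) (α ω Δ : ℝ) (X : Finset V) (x y : ℝ) : Prop :=
  IsDeltaClique E α ω Δ X x y ∧ ∀ X' x' y', IsDeltaClique E α ω Δ X' x' y' →
    X ⊆ X' → x' ≤ x → y ≤ y' → X' = X ∧ x' = x ∧ y' = y

/-- A maximal clique of `L_Δ`. -/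
def IsMaxCliqueD (E : Finset (ℝ × V × V)) (α ω Δ : ℝ) (X : Finset V) (x y : ℝ) : Prop :=
  IsCliqueD E α ω Δ X x y ∧ ∀ X' x' y', IsCliqueD E α ω Δ X' x' y' →
    X ⊆ X' → x' ≤ x → y ≤ y' → X' = X ∧ x' = x ∧ y' = y

/-!
For distinct `u, v`, the `Δ`-clique condition on `(X, [x, y])` says exactly that `[x + Δ, y]` is
covered by `T_{u,v}` (substitute `s ↦ s + Δ`), while the clique condition on `(X, [x + Δ, y])` in
`L_Δ` says that `[x + Δ, y]` lies in a maximal interval of `T_Δ ∩ T_{u,v}`. These agree because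
`T_Δ ∩ T_{u,v}` is a finite union of closed intervals, inside which every closed interval extends
to a maximal one. So `C` is a `Δ`-clique iff `C_Δ` is a clique, and as the shift `x ↦ x + Δ` is
an order isomorphism, it is a bijection preserving maximality.
-/

open Set OrderDual

section FiniteUnionIcc

variable {α ι : Type*} [LinearOrder α] {s : Set ι} {a b : ι → α} {c d : α}

theorem exists_isLeast_Icc_subset_biUnion (hs : s.Finite)
    (hc : c ∈ ⋃ i ∈ s, Icc (a i) (b i)) :
    ∃ l, IsLeast {l | l ≤ c ∧ Icc l c ⊆ ⋃ i ∈ s, Icc (a i) (b i)} l := by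
  set S := ⋃ i ∈ s, Icc (a i) (b i)
  set P := {l | l ≤ c ∧ Icc l c ⊆ S}
  have hcP : c ∈ P := ⟨le_rfl, by rwa [Icc_self, singleton_subset_iff]⟩
  -- the only candidates for the least element are `c` and the left endpoints `a i`
  have hfin : (P ∩ insert c (a '' s)).Finite :=
    ((hs.image a).insert c).subset inter_subset_right
  obtain ⟨l, ⟨hlP, -⟩, hl⟩ := exists_min_image _ id hfin ⟨c, hcP, mem_insert c _⟩
  refine ⟨l, hlP, fun l' ⟨hl'c, hl'S⟩ => ?_⟩
  obtain ⟨i, hi, hil', hl'i⟩ := mem_iUnion₂.1 (hl'S ⟨le_rfl, hl'c⟩)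
  have haiP : a i ∈ P := by
    refine ⟨hil'.trans hl'c, fun x hx => ?_⟩
    rcases le_total x l' with hxl' | hl'x
    · exact mem_biUnion hi ⟨hx.1, hxl'.trans hl'i⟩
    · exact hl'S ⟨hl'x, hx.2⟩
  exact (hl (a i) ⟨haiP, mem_insert_of_mem c (mem_image_of_mem a hi)⟩).trans hil'

theorem exists_isGreatest_Icc_subset_biUnion (hs : s.Finite)
    (hd : d ∈ ⋃ i ∈ s, Icc (a i) (b i)) :
    ∃ r, IsGreatest {r | d ≤ r ∧ Icc d r ⊆ ⋃ i ∈ s, Icc (a i) (b i)} r := by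
  obtain ⟨r, hrP, hrle⟩ := exists_isLeast_Icc_subset_biUnion (α := αᵒᵈ)
    (a := toDual ∘ b) (b := toDual ∘ a) (c := toDual d) hs (by simpa [Icc_toDual] using hd)
  have hIcc (r : αᵒᵈ) : Icc r (toDual d) ⊆ ⋃ i ∈ s, Icc (toDual (b i)) (toDual (a i)) ↔
      Icc d (ofDual r) ⊆ ⋃ i ∈ s, Icc (a i) (b i) := by
    rw [← toDual_ofDual r]
    simp only [Icc_toDual, ← preimage_iUnion₂, ofDual.surjective.preimage_subset_preimage_iff,
      ofDual_toDual]
  exact ⟨ofDual r, ⟨hrP.1, (hIcc r).1 hrP.2⟩,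
    fun r' hr' => hrle ⟨hr'.1, (hIcc (toDual r')).2 hr'.2⟩⟩

theorem exists_maximal_Icc_subset_biUnion (hs : s.Finite) (hcd : c ≤ d)
    (hS : Icc c d ⊆ ⋃ i ∈ s, Icc (a i) (b i)) :
    ∃ l r, l ≤ c ∧ d ≤ r ∧ Icc l r ⊆ ⋃ i ∈ s, Icc (a i) (b i) ∧
      ∀ l' r', l' ≤ l → r ≤ r' → Icc l' r' ⊆ ⋃ i ∈ s, Icc (a i) (b i) → l' = l ∧ r' = r := by
  obtain ⟨l, ⟨hlc, hlS⟩, hl⟩ := exists_isLeast_Icc_subset_biUnion hs (hS ⟨le_rfl, hcd⟩)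
  obtain ⟨r, ⟨hdr, hrS⟩, hr⟩ := exists_isGreatest_Icc_subset_biUnion hs (hS ⟨hcd, le_rfl⟩)
  refine ⟨l, r, hlc, hdr, ?_, fun l' r' hl' hr' h => ⟨hl'.antisymm ?_, (hr'.antisymm ?_).symm⟩⟩
  · rw [← Icc_union_Icc_eq_Icc hlc (hcd.trans hdr), ← Icc_union_Icc_eq_Icc hcd hdr]
    exact union_subset hlS (union_subset hS hrS)
  · exact hl ⟨hl'.trans hlc, (Icc_subset_Icc_right (hcd.trans (hdr.trans hr'))).trans h⟩
  · exact hr ⟨hdr.trans hr', (Icc_subset_Icc_left ((hl'.trans hlc).trans hcd)).trans h⟩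

end FiniteUnionIcc

section LinkStream

variable {V : Type*} {E : Finset (ℝ × V × V)} {α ω Δ x y : ℝ} {u v : V}

theorem mem_Tuv {s : ℝ} : s ∈ Tuv E Δ u v ↔ ∃ t, (t, u, v) ∈ E ∧ t ≤ s ∧ s ≤ t + Δ := by
  simp only [Tuv, mem_iUnion, mem_ofPred_eq, mem_Icc, exists_prop]

theorem TD_inter_Tuv :
    TD α ω Δ ∩ Tuv E Δ u v = ⋃ t ∈ {t | (t, u, v) ∈ E}, Icc ((α + Δ) ⊔ t) (ω ⊓ (t + Δ)) := by
  simp only [TD, Tuv, inter_iUnion₂, Icc_inter_Icc]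

theorem finite_setOf_mk_mem {β γ : Type*} (s : Finset (β × γ)) (c : γ) :
    {b | (b, c) ∈ s}.Finite :=
  s.finite_toSet.preimage fun _ _ _ _ h => (Prod.mk.inj h).1

theorem exists_EDelta_iff (hxy : x ≤ y) :
    (∃ b e, EDelta E α ω Δ b e u v ∧ b ≤ x ∧ y ≤ e) ↔ Icc x y ⊆ TD α ω Δ ∩ Tuv E Δ u v := by
  refine ⟨fun ⟨b, e, ⟨_, hbe, _⟩, hb, he⟩ => (Icc_subset_Icc hb he).trans hbe, fun h => ?_⟩
  rw [TD_inter_Tuv] at h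
  obtain ⟨b, e, hb, he, hbe, hmax⟩ :=
    exists_maximal_Icc_subset_biUnion (finite_setOf_mk_mem E (u, v)) hxy h
  exact ⟨b, e, ⟨(hb.trans hxy).trans he, TD_inter_Tuv ▸ hbe, TD_inter_Tuv ▸ hmax⟩, hb, he⟩

theorem Icc_add_subset_Tuv_iff : Icc (x + Δ) y ⊆ Tuv E Δ u v ↔
    ∀ s, x ≤ s → s + Δ ≤ y → ∃ t, s ≤ t ∧ t ≤ s + Δ ∧ (t, u, v) ∈ E := by
  constructor
  · intro h s hxs hsy
    obtain ⟨t, ht, hts, hst⟩ := mem_Tuv.1 (h ⟨by linarith, hsy⟩)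
    exact ⟨t, by linarith, hts, ht⟩
  · rintro h s ⟨hxs, hsy⟩
    obtain ⟨t, hst, hts, ht⟩ := h (s - Δ) (by linarith) (by linarith)
    exact mem_Tuv.2 ⟨t, ht, by linarith, by linarith⟩

theorem isCliqueD_add_iff {X : Finset V} :
    IsCliqueD E α ω Δ X (x + Δ) y ↔ IsDeltaClique E α ω Δ X x y := by
  constructor
  · rintro ⟨hcard, hxy, hpairs⟩
    have hcover (u) (hu : u ∈ X) (v) (hv : v ∈ X) (huv : u ≠ v) :=
      (exists_EDelta_iff hxy).1 (hpairs u hu v hv huv)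
    obtain ⟨u, hu, v, hv, huv⟩ := Finset.one_lt_card.1 hcard
    have hTD : Icc (x + Δ) y ⊆ Icc (α + Δ) ω := (hcover u hu v hv huv).trans inter_subset_left
    rw [Icc_subset_Icc_iff hxy] at hTD
    exact ⟨hcard, by linarith, hTD.2, hxy, fun u hu v hv huv =>
      Icc_add_subset_Tuv_iff.1 ((hcover u hu v hv huv).trans inter_subset_right)⟩
  · rintro ⟨hcard, hαx, hyω, hxy, hpairs⟩
    refine ⟨hcard, hxy, fun u hu v hv huv => (exists_EDelta_iff hxy).2 (subset_inter ?_ ?_)⟩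
    · exact Icc_subset_Icc (by linarith) hyω
    · exact Icc_add_subset_Tuv_iff.2 (hpairs u hu v hv huv)

end LinkStream

theorem deltaClique_bijection_general {V : Type*}
    (E : Finset (ℝ × V × V)) (α ω Δ : ℝ) :
    Set.BijOn (fun p : Finset V × ℝ × ℝ => (p.1, p.2.1 + Δ, p.2.2))
      {p | IsDeltaClique E α ω Δ p.1 p.2.1 p.2.2}
      {p | IsCliqueD E α ω Δ p.1 p.2.1 p.2.2} ∧
    ∀ X x y, IsMaxDeltaClique E α ω Δ X x y ↔ IsMaxCliqueD E α ω Δ X (x + Δ) y := by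
  have hclique (X : Finset V) (x y : ℝ) :
      IsCliqueD E α ω Δ X x y ↔ IsDeltaClique E α ω Δ X (x - Δ) y := by
    rw [← isCliqueD_add_iff, sub_add_cancel]
  refine ⟨⟨fun p hp => isCliqueD_add_iff.2 hp, ?_, ?_⟩, fun X x y => ⟨?_, ?_⟩⟩
  · rintro ⟨X, x, y⟩ - ⟨X', x', y'⟩ - h
    simpa only [Prod.mk.injEq, add_left_inj] using h
  · rintro ⟨X, x, y⟩ h
    exact ⟨(X, x - Δ, y), (hclique X x y).1 h, by simp⟩
  · rintro ⟨hC, hmax⟩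
    refine ⟨isCliqueD_add_iff.2 hC, fun X' x' y' hC' hX hx hy => ?_⟩
    obtain ⟨rfl, hx', rfl⟩ := hmax X' (x' - Δ) y' ((hclique X' x' y').1 hC') hX (by linarith) hy
    exact ⟨rfl, by linarith, rfl⟩
  · rintro ⟨hC, hmax⟩
    refine ⟨isCliqueD_add_iff.1 hC, fun X' x' y' hC' hX hx hy => ?_⟩
    obtain ⟨rfl, hx', rfl⟩ :=
      hmax X' (x' + Δ) y' (isCliqueD_add_iff.2 hC') hX (by linarith) hy
    exact ⟨rfl, by linarith, rfl⟩

/-- `(X,[x,y]) ↦ (X,[x+Δ,y])` is a bijection between the `Δ`-cliques of `L`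
and the cliques of `L_Δ`, preserving maximality. -/
theorem deltaClique_bijection {V : Type*} [DecidableEq V]
    (E : Finset (ℝ × V × V)) (α ω Δ : ℝ) (hΔ0 : 0 ≤ Δ) (hΔ : Δ ≤ ω - α)
    (hE : ∀ t u v, (t, u, v) ∈ E → (α ≤ t ∧ t ≤ ω) ∧ u ≠ v)
    (hU : ∀ t u v, (t, u, v) ∈ E → (t, v, u) ∈ E) :
    Set.BijOn (fun p : Finset V × ℝ × ℝ => (p.1, p.2.1 + Δ, p.2.2))
      {p | IsDeltaClique E α ω Δ p.1 p.2.1 p.2.2}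
      {p | IsCliqueD E α ω Δ p.1 p.2.1 p.2.2} ∧
    ∀ X x y, IsMaxDeltaClique E α ω Δ X x y ↔ IsMaxCliqueD E α ω Δ X (x + Δ) y :=
  deltaClique_bijection_general E α ω Δ
end

section
/- If (X, [x,y]) is a clique of a simple undirected link stream with durations L and there exists a link (b,e,u,v) ∈ E with u,v ∈ X and b = x and e = y, and no node outside X can be added while keeping a clique on [x,y], then the clique obtained by extending [x,y] maximally in time equals (X,[x,y]) itself; in particular, (X,[x,y]) is a maximal clique. -/
variable {V : Type*} [DecidableEq V]

/-- There is a link between `u` and `v` whose interval contains `[x,y]`. -/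
def HasLink (E : Finset (ℝ × ℝ × V × V)) (u v : V) (x y : ℝ) : Prop :=
  ∃ b e, (b, e, u, v) ∈ E ∧ b ≤ x ∧ y ≤ e

/-- A clique `(X,[x,y])` of a link stream with durations. -/
def IsClique (E : Finset (ℝ × ℝ × V × V)) (X : Finset V) (x y : ℝ) : Prop :=
  2 ≤ X.card ∧ x ≤ y ∧ ∀ u ∈ X, ∀ v ∈ X, u ≠ v → HasLink E u v x y

/-- A maximal clique of a link stream with durations. -/
def IsMaxClique (E : Finset (ℝ × ℝ × V × V)) (X : Finset V) (x y : ℝ) : Prop :=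
  IsClique E X x y ∧ ∀ X' x' y', IsClique E X' x' y' → X ⊆ X' → x' ≤ x → y ≤ y' →
    X' = X ∧ x' = x ∧ y' = y

/-- The link stream is simple: no self-loops, well-formed intervals. -/
def SimpleLS (E : Finset (ℝ × ℝ × V × V)) : Prop :=
  ∀ b e u v, (b, e, u, v) ∈ E → u ≠ v ∧ b ≤ e

/-- The link stream is undirected. -/
def UndirectedLS (E : Finset (ℝ × ℝ × V × V)) : Prop :=
  ∀ b e u v, (b, e, u, v) ∈ E → (b, e, v, u) ∈ E

/-- Any two distinct links between the same pair of nodes have disjoint intervals. -/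
def DisjointLinks (E : Finset (ℝ × ℝ × V × V)) : Prop :=
  ∀ b e b' e' u v, (b, e, u, v) ∈ E → (b', e', u, v) ∈ E → (b, e) ≠ (b', e') →
    Disjoint (Set.Icc b e) (Set.Icc b' e')

omit [DecidableEq V] in
theorem HasLink.mono {E : Finset (ℝ × ℝ × V × V)} {u v : V} {x y x' y' : ℝ}
    (h : HasLink E u v x' y') (hx : x' ≤ x) (hy : y ≤ y') : HasLink E u v x y :=
  let ⟨b, e, hbe, hb, he⟩ := h
  ⟨b, e, hbe, hb.trans hx, hy.trans he⟩

omit [DecidableEq V] in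
theorem IsClique.mono {E : Finset (ℝ × ℝ × V × V)} {X Y : Finset V} {x y x' y' : ℝ}
    (h : IsClique E X x' y') (hYX : Y ⊆ X) (hY : 2 ≤ Y.card) (hx : x' ≤ x) (hxy : x ≤ y)
    (hy : y ≤ y') : IsClique E Y x y :=
  ⟨hY, hxy, fun a ha b hb hab => (h.2.2 a (hYX ha) b (hYX hb) hab).mono hx hy⟩

omit [DecidableEq V] in
/-- Disjointness forces the link witnessing `HasLink` to be `(x,y,u,v)` itself. -/
theorem HasLink.eq_of_mem {E : Finset (ℝ × ℝ × V × V)} (hD : DisjointLinks E) {u v : V}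
    {x y x' y' : ℝ} (hlink : (x, y, u, v) ∈ E) (hxy : x ≤ y) (h : HasLink E u v x' y')
    (hx : x' ≤ x) (hy : y ≤ y') : x' = x ∧ y' = y := by
  obtain ⟨b, e, hbe, hb, he⟩ := h
  have hbe_eq : (b, e) = (x, y) := by
    by_contra hne
    exact Set.disjoint_left.mp (hD b e x y u v hbe hlink hne)
      ⟨hb.trans hx, hxy.trans (hy.trans he)⟩ ⟨le_rfl, hxy⟩
  obtain ⟨rfl, rfl⟩ := Prod.mk.inj hbe_eq
  exact ⟨le_antisymm hx hb, le_antisymm he hy⟩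

theorem clique_with_tight_link_is_max_general {V : Type*} [DecidableEq V]
    (E : Finset (ℝ × ℝ × V × V)) (hS : SimpleLS E)
    (hD : DisjointLinks E) (X : Finset V) (x y : ℝ) (u v : V)
    (hC : IsClique E X x y) (hu : u ∈ X) (hv : v ∈ X) (hlink : (x, y, u, v) ∈ E)
    (hnoadd : ∀ w ∉ X, ¬ IsClique E (insert w X) x y) :
    (∀ x' y', IsClique E X x' y' → x' ≤ x → y ≤ y' → x' = x ∧ y' = y) ∧
    IsMaxClique E X x y := by
  have time_max : ∀ x' y', IsClique E X x' y' → x' ≤ x → y ≤ y' → x' = x ∧ y' = y :=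
    fun x' y' hC' hx hy =>
      (hC'.2.2 u hu v hv (hS x y u v hlink).1).eq_of_mem hD hlink hC.2.1 hx hy
  refine ⟨time_max, hC, fun X' x' y' hC' hXX' hx hy => ?_⟩
  have hX'X : X' ⊆ X := fun w hw => by
    by_contra hwX
    refine hnoadd w hwX (hC'.mono (Finset.insert_subset hw hXX') ?_ hx hC.2.1 hy)
    exact hC.1.trans (Finset.card_le_card (Finset.subset_insert w X))
  obtain rfl := hX'X.antisymm hXX'
  exact ⟨rfl, time_max x' y' hC' hx hy⟩

/-- a clique realized by a single link `(x,y,u,v)`, to which no node can be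
added, cannot be extended in time and is maximal. -/
theorem clique_with_tight_link_is_max {V : Type*} [DecidableEq V]
    (E : Finset (ℝ × ℝ × V × V)) (hS : SimpleLS E) (hU : UndirectedLS E)
    (hD : DisjointLinks E) (X : Finset V) (x y : ℝ) (u v : V)
    (hC : IsClique E X x y) (hu : u ∈ X) (hv : v ∈ X) (hlink : (x, y, u, v) ∈ E)
    (hnoadd : ∀ w ∉ X, ¬ IsClique E (insert w X) x y) :
    (∀ x' y', IsClique E X x' y' → x' ≤ x → y ≤ y' → x' = x ∧ y' = y) ∧
    IsMaxClique E X x y :=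
  clique_with_tight_link_is_max_general E hS hD X x y u v hC hu hv hlink hnoadd
end
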